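/- Let 0 < p, p1, p2 < ∞ and 0 < q, q1, q2 ≤ ∞ satisfy 1/p = 1/p1 + 1/p2 and 1/q ≤ 1/q1 + 1/q2. Then there is a constant C = C(p1, p2, q1, q2, q) > 0 such that for all measurable f ∈ L^{p1,q1}(Ω) and g ∈ L^{p2,q2}(Ω) on a domain Ω ⊆ ℝⁿ, one has ‖fg‖_{L^{p,q}} ≤ C ‖f‖_{L^{p1,q1}} ‖g‖_{L^{p2,q2}}. -/

import Mathlib

/- Common infrastructure: Euclidean space, test functions, weak gradients,
Sobolev-type membership, Lorentz norms, Lipschitz domains, and weak forms of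
the (perturbed) Stokes system. -/

open MeasureTheory ENNReal Set Metric

noncomputable section

abbrev En (n : ℕ) : Type := EuclideanSpace ℝ (Fin n)
abbrev Mat (n : ℕ) : Type := EuclideanSpace ℝ (Fin n × Fin n)

variable {n : ℕ}

/-- Partial derivative in direction `i`. -/
def pd (i : Fin n) (φ : En n → ℝ) (x : En n) : ℝ :=
  fderiv ℝ φ x (EuclideanSpace.single i 1)

/-- Scalar test function compactly supported in `Ω`. -/
def IsTest (Ω : Set (En n)) (φ : En n → ℝ) : Prop :=
  ContDiff ℝ (⊤ : ℕ∞) φ ∧ HasCompactSupport φ ∧ tsupport φ ⊆ Ω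

/-- Vector test field compactly supported in `Ω`. -/
def IsTestV (Ω : Set (En n)) (φ : En n → En n) : Prop :=
  ContDiff ℝ (⊤ : ℕ∞) φ ∧ HasCompactSupport φ ∧ tsupport φ ⊆ Ω

/-- Divergence of a smooth vector field. -/
def divV (φ : En n → En n) (x : En n) : ℝ :=
  ∑ i, pd i (fun y => φ y i) x

/-- Gradient (Jacobian matrix) of a smooth vector field, `(i,j) ↦ ∂ᵢ φⱼ`. -/
def gradV (φ : En n → En n) (x : En n) : Mat n :=
  WithLp.toLp 2 (fun ij : Fin n × Fin n => pd ij.1 (fun y => φ y ij.2) x)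

/-- Gradient of a smooth scalar function. -/
def gradS (φ : En n → ℝ) (x : En n) : En n :=
  WithLp.toLp 2 (fun i => pd i φ x)

/-- `G` is the weak (distributional) gradient of the vector field `u` on `Ω`,
`G x (i,j) = ∂ᵢ uⱼ (x)`. -/
def HasWeakGrad (Ω : Set (En n)) (u : En n → En n) (G : En n → Mat n) : Prop :=
  ∀ (i j : Fin n) (φ : En n → ℝ), IsTest Ω φ →
    ∫ x in Ω, pd i φ x * u x j = - ∫ x in Ω, φ x * G x (i, j)

/-- `g` is the weak gradient of the scalar function `u` on `Ω`. -/
def HasWeakGradS (Ω : Set (En n)) (u : En n → ℝ) (g : En n → En n) : Prop :=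
  ∀ (i : Fin n) (φ : En n → ℝ), IsTest Ω φ →
    ∫ x in Ω, pd i φ x * u x = - ∫ x in Ω, φ x * g x i

/-- The `W^{1,q}(Ω)` norm of a vector field `u` with weak gradient `G`. -/
def W1Norm (Ω : Set (En n)) (q : ℝ≥0∞) (u : En n → En n) (G : En n → Mat n) : ℝ≥0∞ :=
  eLpNorm u q (volume.restrict Ω) + eLpNorm G q (volume.restrict Ω)

/-- The `W^{1,q}(Ω)` norm of a scalar function `u` with weak gradient `g`. -/
def W1NormS (Ω : Set (En n)) (q : ℝ≥0∞) (u : En n → ℝ) (g : En n → En n) : ℝ≥0∞ :=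
  eLpNorm u q (volume.restrict Ω) + eLpNorm g q (volume.restrict Ω)

/-- Membership in `W^{1,q}(Ω)^n`. -/
def MemW1q (Ω : Set (En n)) (q : ℝ≥0∞) (u : En n → En n) (G : En n → Mat n) : Prop :=
  Measurable u ∧ Measurable G ∧ W1Norm Ω q u G < ⊤ ∧ HasWeakGrad Ω u G

/-- Membership in `W^{1,q}_0(Ω)^n`: Sobolev regularity plus approximability by
test fields in the `W^{1,q}` norm. -/
def MemW1q0 (Ω : Set (En n)) (q : ℝ≥0∞) (u : En n → En n) (G : En n → Mat n) : Prop :=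
  MemW1q Ω q u G ∧
  ∀ ε : ℝ, 0 < ε → ∃ φ : En n → En n, IsTestV Ω φ ∧
    eLpNorm (fun x => u x - φ x) q (volume.restrict Ω)
      + eLpNorm (fun x => G x - gradV φ x) q (volume.restrict Ω) ≤ ENNReal.ofReal ε

/-- Membership in `W^{1,q}(Ω)` (scalar). -/
def MemW1qS (Ω : Set (En n)) (q : ℝ≥0∞) (u : En n → ℝ) (g : En n → En n) : Prop :=
  Measurable u ∧ Measurable g ∧ W1NormS Ω q u g < ⊤ ∧ HasWeakGradS Ω u g

/-- Membership in `W^{1,q}_0(Ω)` (scalar). -/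
def MemW1q0S (Ω : Set (En n)) (q : ℝ≥0∞) (u : En n → ℝ) (g : En n → En n) : Prop :=
  MemW1qS Ω q u g ∧
  ∀ ε : ℝ, 0 < ε → ∃ φ : En n → ℝ, IsTest Ω φ ∧
    eLpNorm (fun x => u x - φ x) q (volume.restrict Ω)
      + eLpNorm (fun x => g x - gradS φ x) q (volume.restrict Ω) ≤ ENNReal.ofReal ε

/-- `div b = 0` in the distributional sense on `Ω`. -/
def DivFree (Ω : Set (En n)) (b : En n → En n) : Prop :=
  ∀ φ : En n → ℝ, IsTest Ω φ → ∫ x in Ω, ∑ i, b x i * pd i φ x = 0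

/-- `div b ≥ 0` in the distributional sense on `Ω`. -/
def DivNonneg (Ω : Set (En n)) (b : En n → En n) : Prop :=
  ∀ φ : En n → ℝ, IsTest Ω φ → (∀ x, 0 ≤ φ x) →
    ∫ x in Ω, ∑ i, b x i * pd i φ x ≤ 0

/-- The weak `L^p` (Lorentz `L^{p,∞}`) quasinorm. -/
def wLpNorm {α : Type*} [MeasurableSpace α] (μ : Measure α) (p : ℝ)
    {F : Type*} [Norm F] (f : α → F) : ℝ≥0∞ :=
  ⨆ s : NNReal, (s : ℝ≥0∞) * (μ {x | (s : ℝ) < ‖f x‖}) ^ (1 / p)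

/-- Decreasing rearrangement of `f` with respect to `μ`. -/
def rearr {α : Type*} [MeasurableSpace α] (μ : Measure α) {F : Type*} [Norm F]
    (f : α → F) (t : ℝ) : ℝ≥0∞ :=
  sInf {s : ℝ≥0∞ | μ {x | s < ENNReal.ofReal ‖f x‖} ≤ ENNReal.ofReal t}

/-- The Lorentz `L^{p,q}` quasinorm (first exponent `p` finite, second `q ∈ (0,∞]`). -/
def lorentzNorm {α : Type*} [MeasurableSpace α] (μ : Measure α) (p : ℝ) (q : ℝ≥0∞)
    {F : Type*} [Norm F] (f : α → F) : ℝ≥0∞ :=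
  if q = ∞ then ⨆ t : {t : ℝ // 0 < t}, ENNReal.ofReal (t.1 ^ (1 / p)) * rearr μ f t.1
  else (∫⁻ t in Set.Ioi (0 : ℝ),
      ENNReal.ofReal (t ^ (q.toReal / p - 1)) * (rearr μ f t) ^ q.toReal) ^ (1 / q.toReal)

/-- A bounded Lipschitz domain with Lipschitz constant `L`: near each boundary point,
after a rigid motion, `Ω` coincides with the region above the graph of an
`L`-Lipschitz function. -/
def IsBddLipschitzDomain (Ω : Set (En n)) (L : ℝ) : Prop :=
  IsOpen Ω ∧ Bornology.IsBounded Ω ∧ Ω.Nonempty ∧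
  ∀ x₀ ∈ frontier Ω, ∃ r : ℝ, 0 < r ∧ ∃ v : En n, ‖v‖ = 1 ∧ ∃ γ : En n → ℝ,
    LipschitzWith (Real.toNNReal L) γ ∧
    ∀ x ∈ Metric.ball x₀ r,
      (x ∈ Ω ↔ γ ((x - x₀) - (inner ℝ (x - x₀) v : ℝ) • v) < (inner ℝ (x - x₀) v : ℝ))

/-- The region above the graph of `γ` (in the unit direction `v`) inside `B_R(0)`. -/
def graphDomain (R : ℝ) (v : En n) (γ : En n → ℝ) : Set (En n) :=
  {x ∈ Metric.ball (0 : En n) R | γ (x - (inner ℝ x v : ℝ) • v) < (inner ℝ x v : ℝ)}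

/-- Weak (distributional) form of the perturbed Stokes system
`-Δu + b·∇u + ∇π = div 𝔾` on `Ω`, for a pair `(u, π)` with `G` the weak
gradient of `u`, using `div b = 0` to write `b·∇u = div (b ⊗ u)`. -/
def PerturbedStokesPair (Ω : Set (En n)) (b : En n → En n) (𝔾 : En n → Mat n)
    (u : En n → En n) (G : En n → Mat n) (π : En n → ℝ) : Prop :=
  ∀ ζ : En n → En n, IsTestV Ω ζ →
    ∫ x in Ω, ((∑ ij : Fin n × Fin n, (G x ij - b x ij.1 * u x ij.2) * gradV ζ x ij)
        - π x * divV ζ x)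
      = - ∫ x in Ω, ∑ ij : Fin n × Fin n, 𝔾 x ij * gradV ζ x ij

/-- Weak form of the Stokes system `-Δv + ∇π = div 𝔽`, `div v = 0`, `v|_{∂Ω} = 0`,
`∫ π = 0`, for a pair `(v, π)` with `Gv` the weak gradient of `v`. -/
def StokesPair (Ω : Set (En n)) (𝔽 : En n → Mat n)
    (v : En n → En n) (Gv : En n → Mat n) (π : En n → ℝ) : Prop :=
  MemW1q0 Ω 2 v Gv ∧ DivFree Ω v ∧ Measurable π ∧
    eLpNorm π 2 (volume.restrict Ω) < ⊤ ∧ IntegrableOn π Ω ∧ (∫ x in Ω, π x) = 0 ∧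
    ∀ ζ : En n → En n, IsTestV Ω ζ →
      ∫ x in Ω, ((∑ ij : Fin n × Fin n, Gv x ij * gradV ζ x ij) - π x * divV ζ x)
        = - ∫ x in Ω, ∑ ij : Fin n × Fin n, 𝔽 x ij * gradV ζ x ij

section Rearr

variable {α : Type*} [MeasurableSpace α] {μ : Measure α} {F : Type*} [Norm F] {f : α → F}

lemma rearr_le {s : ℝ≥0∞} {t : ℝ} (h : μ {x | s < ENNReal.ofReal ‖f x‖} ≤ ENNReal.ofReal t) :
    rearr μ f t ≤ s := sInf_le h

lemma meas_le_of_rearr_lt {s : ℝ≥0∞} {t : ℝ} (h : rearr μ f t < s) :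
    μ {x | s < ENNReal.ofReal ‖f x‖} ≤ ENNReal.ofReal t := by
  obtain ⟨s', hs', hlt⟩ := sInf_lt_iff.mp h
  exact le_trans (measure_mono fun x hx => lt_of_le_of_lt hlt.le hx) hs'

lemma rearr_antitone : Antitone (rearr μ f) := fun t₁ t₂ h =>
  sInf_le_sInf fun s hs => le_trans hs (ENNReal.ofReal_le_ofReal h)

lemma rearr_measurable : Measurable (rearr μ f) := rearr_antitone.measurable

lemma rearr_spec {t : ℝ} (h : rearr μ f t ≠ ∞) :
    μ {x | rearr μ f t < ENNReal.ofReal ‖f x‖} ≤ ENNReal.ofReal t := by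
  set a := rearr μ f t with ha
  have key : {x | a < ENNReal.ofReal ‖f x‖}
      = ⋃ n : ℕ, {x | a + (((n : ℝ≥0∞) + 1))⁻¹ < ENNReal.ofReal ‖f x‖} := by
    ext x
    simp only [mem_setOf_eq, mem_iUnion]
    constructor
    · intro hx
      have h1 : ENNReal.ofReal ‖f x‖ - a ≠ 0 := (tsub_pos_of_lt hx).ne'
      obtain ⟨n, hn⟩ := ENNReal.exists_inv_nat_lt h1
      refine ⟨n, ?_⟩
      have h2 : a + (((n : ℝ≥0∞) + 1))⁻¹ < a + (ENNReal.ofReal ‖f x‖ - a) := by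
        refine ENNReal.add_lt_add_left h ?_
        refine lt_of_le_of_lt ?_ hn
        exact ENNReal.inv_le_inv.2 (by simp)
      rwa [add_tsub_cancel_of_le hx.le] at h2
    · rintro ⟨n, hn⟩
      exact lt_of_le_of_lt le_self_add hn
  have hmono : Monotone fun n : ℕ => {x | a + (((n : ℝ≥0∞) + 1))⁻¹ < ENNReal.ofReal ‖f x‖} := by
    intro n m hnm x hx
    refine lt_of_le_of_lt (add_le_add le_rfl (ENNReal.inv_le_inv.2 ?_)) hx
    exact add_le_add (by exact_mod_cast hnm) le_rfl
  rw [key, hmono.measure_iUnion]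
  refine iSup_le fun n => meas_le_of_rearr_lt ?_
  rw [← ha]
  exact ENNReal.lt_add_right h (by simp)

lemma rearr_mul_le {f g : α → ℝ} {t₁ t₂ : ℝ} (h₁ : 0 ≤ t₁) (h₂ : 0 ≤ t₂) :
    rearr μ (fun x => f x * g x) (t₁ + t₂) ≤ rearr μ f t₁ * rearr μ g t₂ := by
  set a := rearr μ f t₁ with ha
  set b := rearr μ g t₂ with hb
  have habs : ∀ x : α, ENNReal.ofReal ‖f x * g x‖
      = ENNReal.ofReal ‖f x‖ * ENNReal.ofReal ‖g x‖ := by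
    intro x
    rw [norm_mul, ENNReal.ofReal_mul (norm_nonneg _)]
  by_cases ha0 : a = 0
  · have := rearr_spec (f := f) (t := t₁) (by rw [← ha, ha0]; exact ENNReal.zero_ne_top)
    rw [← ha, ha0] at this
    rw [ha0, zero_mul]
    refine rearr_le (le_trans (measure_mono ?_) (le_trans this (ENNReal.ofReal_le_ofReal (by linarith))))
    intro x hx
    simp only [mem_setOf_eq, pos_iff_ne_zero] at hx ⊢
    intro h0
    apply hx
    rw [habs x, h0, zero_mul]
  by_cases hb0 : b = 0
  · have := rearr_spec (f := g) (t := t₂) (by rw [← hb, hb0]; exact ENNReal.zero_ne_top)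
    rw [← hb, hb0] at this
    rw [hb0, mul_zero]
    refine rearr_le (le_trans (measure_mono ?_) (le_trans this (ENNReal.ofReal_le_ofReal (by linarith))))
    intro x hx
    simp only [mem_setOf_eq, pos_iff_ne_zero] at hx ⊢
    intro h0
    apply hx
    rw [habs x, h0, mul_zero]
  by_cases hat : a = ∞
  · rw [hat, ENNReal.top_mul hb0]; exact le_top
  by_cases hbt : b = ∞
  · rw [hbt, ENNReal.mul_top ha0]; exact le_top
  · have hfa := rearr_spec (f := f) (t := t₁) (by rw [← ha]; exact hat)
    have hgb := rearr_spec (f := g) (t := t₂) (by rw [← hb]; exact hbt)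
    rw [← ha] at hfa; rw [← hb] at hgb
    refine rearr_le ?_
    have hsub : {x | a * b < ENNReal.ofReal ‖f x * g x‖}
        ⊆ {x | a < ENNReal.ofReal ‖f x‖} ∪ {x | b < ENNReal.ofReal ‖g x‖} := by
      intro x hx
      simp only [mem_setOf_eq, mem_union] at hx ⊢
      by_contra hcon
      push_neg at hcon
      rw [habs x] at hx
      exact absurd (mul_le_mul' hcon.1 hcon.2) (not_le.2 hx)
    calc μ {x | a * b < ENNReal.ofReal ‖f x * g x‖}
        ≤ μ ({x | a < ENNReal.ofReal ‖f x‖} ∪ {x | b < ENNReal.ofReal ‖g x‖}) :=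
          measure_mono hsub
      _ ≤ μ {x | a < ENNReal.ofReal ‖f x‖} + μ {x | b < ENNReal.ofReal ‖g x‖} :=
          measure_union_le _ _
      _ ≤ ENNReal.ofReal t₁ + ENNReal.ofReal t₂ := add_le_add hfa hgb
      _ = ENNReal.ofReal (t₁ + t₂) := (ENNReal.ofReal_add h₁ h₂).symm

end Rearr

section Integrals

variable {α : Type*} [MeasurableSpace α] {μ : Measure α} {F : Type*} [Norm F] {f : α → F}

/-- The integral appearing in the finite-`q` Lorentz norm. -/
def lint {α : Type*} [MeasurableSpace α] (μ : Measure α) (p c : ℝ)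
    {F : Type*} [Norm F] (f : α → F) : ℝ≥0∞ :=
  ∫⁻ t in Ioi (0 : ℝ), ENNReal.ofReal (t ^ (c / p - 1)) * rearr μ f t ^ c

lemma lorentzNorm_eq {p : ℝ} {q : ℝ≥0∞} (hq : q ≠ ∞) (f : α → F) :
    lorentzNorm μ p q f = (lint μ p q.toReal f) ^ (1 / q.toReal) := by
  rw [lorentzNorm, if_neg hq]; rfl

lemma lorentzNorm_top (p : ℝ) (f : α → F) :
    lorentzNorm μ p ∞ f
      = ⨆ t : {t : ℝ // 0 < t}, ENNReal.ofReal (t.1 ^ (1 / p)) * rearr μ f t.1 := by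
  rw [lorentzNorm, if_pos rfl]

lemma lint_integrand_measurable (p c : ℝ) (f : α → F) :
    Measurable fun t : ℝ => ENNReal.ofReal (t ^ (c / p - 1)) * rearr μ f t ^ c := by
  have h := rearr_measurable (μ := μ) (f := f)
  fun_prop

lemma lintegral_rpow_Ioc {a t : ℝ} (ha : 0 < a) (ht : 0 < t) :
    ∫⁻ s in Ioc (0 : ℝ) t, ENNReal.ofReal (s ^ (a - 1)) = ENNReal.ofReal (t ^ a / a) := by
  rw [← ofReal_integral_eq_lintegral_ofReal]
  · congr 1
    rw [← intervalIntegral.integral_of_le ht.le, integral_rpow (Or.inl (by linarith))]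
    rw [Real.zero_rpow (by linarith : a - 1 + 1 ≠ 0)]
    ring_nf
  · rw [← IntegrableOn, ← intervalIntegrable_iff_integrableOn_Ioc_of_le ht.le]
    exact intervalIntegral.intervalIntegrable_rpow' (by linarith)
  · filter_upwards [ae_restrict_mem measurableSet_Ioc] with s hs
    exact Real.rpow_nonneg hs.1.le _

lemma point_bound {p r : ℝ} (hp : 0 < p) (hr : 0 < r) {t : ℝ} (ht : 0 < t) (f : α → F) :
    ENNReal.ofReal (t ^ (1 / p)) * rearr μ f t
      ≤ ENNReal.ofReal ((r / p) ^ (1 / r)) * (lint μ p r f) ^ (1 / r) := by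
  have hrp : 0 < r / p := div_pos hr hp
  have hI : ENNReal.ofReal (t ^ (r / p) / (r / p)) * rearr μ f t ^ r ≤ lint μ p r f := by
    have h1 : ∫⁻ s in Ioc (0 : ℝ) t, ENNReal.ofReal (s ^ (r / p - 1)) * rearr μ f t ^ r
        ≤ lint μ p r f := by
      refine le_trans (setLIntegral_mono' measurableSet_Ioc fun s hs => ?_)
        (lintegral_mono_set Ioc_subset_Ioi_self)
      exact mul_le_mul_right (ENNReal.rpow_le_rpow (rearr_antitone hs.2) hr.le) _
    calc ENNReal.ofReal (t ^ (r / p) / (r / p)) * rearr μ f t ^ r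
        = (∫⁻ s in Ioc (0 : ℝ) t, ENNReal.ofReal (s ^ (r / p - 1))) * rearr μ f t ^ r := by
          rw [lintegral_rpow_Ioc hrp ht]
      _ = ∫⁻ s in Ioc (0 : ℝ) t, ENNReal.ofReal (s ^ (r / p - 1)) * rearr μ f t ^ r := by
          rw [lintegral_mul_const _ (by fun_prop : Measurable fun s : ℝ => ENNReal.ofReal (s ^ (r / p - 1)))]
      _ ≤ lint μ p r f := h1
  have h2 : rearr μ f t ^ r * ENNReal.ofReal (t ^ (r / p))
      ≤ lint μ p r f * ENNReal.ofReal (r / p) := by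
    calc rearr μ f t ^ r * ENNReal.ofReal (t ^ (r / p))
        = (ENNReal.ofReal (t ^ (r / p) / (r / p)) * rearr μ f t ^ r) * ENNReal.ofReal (r / p) := by
          rw [mul_comm (ENNReal.ofReal _) (rearr μ f t ^ r), mul_assoc,
            ← ENNReal.ofReal_mul (by positivity), div_mul_cancel₀ _ hrp.ne']
      _ ≤ lint μ p r f * ENNReal.ofReal (r / p) := mul_le_mul_left hI _
  have he : r / p * (1 / r) = 1 / p := by field_simp
  have e1 : (rearr μ f t ^ r * ENNReal.ofReal (t ^ (r / p))) ^ (1 / r)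
      = rearr μ f t * ENNReal.ofReal (t ^ (1 / p)) := by
    rw [ENNReal.mul_rpow_of_nonneg _ _ (by positivity), ← ENNReal.rpow_mul,
      mul_one_div_cancel hr.ne', ENNReal.rpow_one,
      ENNReal.ofReal_rpow_of_pos (by positivity), ← Real.rpow_mul ht.le, he]
  have e2 : (lint μ p r f * ENNReal.ofReal (r / p)) ^ (1 / r)
      = lint μ p r f ^ (1 / r) * ENNReal.ofReal ((r / p) ^ (1 / r)) := by
    rw [ENNReal.mul_rpow_of_nonneg _ _ (by positivity), ENNReal.ofReal_rpow_of_pos hrp]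
  have h3 := ENNReal.rpow_le_rpow h2 (by positivity : (0:ℝ) ≤ 1 / r)
  rw [e1, e2] at h3
  rw [mul_comm (ENNReal.ofReal (t ^ (1 / p))), mul_comm (ENNReal.ofReal ((r / p) ^ (1 / r)))]
  exact h3

end Integrals

section Embedding

variable {α : Type*} [MeasurableSpace α] {μ : Measure α} {F : Type*} [Norm F]

lemma emb_top {p r : ℝ} (hp : 0 < p) (hr : 0 < r) (f : α → F) :
    lorentzNorm μ p ∞ f ≤ ENNReal.ofReal ((r / p) ^ (1 / r)) * (lint μ p r f) ^ (1 / r) := by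
  rw [lorentzNorm_top]
  exact iSup_le fun t => point_bound hp hr t.2 f

lemma emb_lt_top {p r c : ℝ} (hp : 0 < p) (hr : 0 < r) (hrc : r ≤ c) (f : α → F) :
    (lint μ p c f) ^ (1 / c)
      ≤ (ENNReal.ofReal ((r / p) ^ (1 / r))) ^ (1 - r / c) * (lint μ p r f) ^ (1 / r) := by
  rcases eq_or_lt_of_le hrc with hrc' | hrc'
  · subst hrc'
    rw [div_self hr.ne', sub_self, ENNReal.rpow_zero, one_mul]
  have hc : 0 < c := lt_trans hr hrc'
  set K := ENNReal.ofReal ((r / p) ^ (1 / r)) with hK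
  set N := (lint μ p r f) ^ (1 / r) with hN
  have hK0 : K ≠ 0 := by
    rw [hK]
    simp only [ne_eq, ENNReal.ofReal_eq_zero, not_le]
    positivity
  have hKtop : K ≠ ∞ := ENNReal.ofReal_ne_top
  by_cases hNtop : lint μ p r f = ∞
  · have hNt : N = ∞ := by
      rw [hN, hNtop]; exact ENNReal.top_rpow_of_pos (one_div_pos.mpr hr)
    have hKe : K ^ (1 - r / c) ≠ 0 := by
      simp only [ne_eq, ENNReal.rpow_eq_zero_iff, not_or, not_and]
      exact ⟨fun h => absurd h hK0, fun h => absurd h hKtop⟩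
    rw [hNt, ENNReal.mul_top hKe]
    exact le_top
  by_cases hN0 : lint μ p r f = 0
  · have hae : ∀ᵐ t ∂(volume.restrict (Ioi (0:ℝ))),
        ENNReal.ofReal (t ^ (r / p - 1)) * rearr μ f t ^ r = 0 :=
      (lintegral_eq_zero_iff (lint_integrand_measurable p r f)).mp hN0
    have hae2 : ∀ᵐ t ∂(volume.restrict (Ioi (0:ℝ))),
        ENNReal.ofReal (t ^ (c / p - 1)) * rearr μ f t ^ c = 0 := by
      filter_upwards [hae, ae_restrict_mem measurableSet_Ioi] with t h1 ht
      have hpos : ENNReal.ofReal (t ^ (r / p - 1)) ≠ 0 := by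
        simp only [ne_eq, ENNReal.ofReal_eq_zero, not_le]
        exact Real.rpow_pos_of_pos ht _
      have : rearr μ f t ^ r = 0 := by
        rcases mul_eq_zero.mp h1 with h | h
        · exact absurd h hpos
        · exact h
      have hr0 : rearr μ f t = 0 := by
        rcases ENNReal.rpow_eq_zero_iff.mp this with h | h
        · exact h.1
        · exact absurd h.2 (by linarith)
      rw [hr0, ENNReal.zero_rpow_of_pos hc, mul_zero]
    have : lint μ p c f = 0 := lintegral_eq_zero_iff (lint_integrand_measurable p c f) |>.mpr hae2
    rw [this, ENNReal.zero_rpow_of_pos (by positivity)]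
    exact zero_le
  -- main case
  have hNpos : N ≠ 0 := by
    rw [hN]; simp only [ne_eq, ENNReal.rpow_eq_zero_iff, not_or, not_and, not_lt]
    exact ⟨fun h => absurd h hN0, fun h => absurd h hNtop⟩
  have hNfin : N ≠ ∞ := by
    rw [hN]; simp only [ne_eq, ENNReal.rpow_eq_top_iff, not_or, not_and, not_lt]
    exact ⟨fun h => absurd h hN0, fun h => absurd h hNtop⟩
  have key : lint μ p c f ≤ (K * N) ^ (c - r) * lint μ p r f := by
    have hbnd : ∀ t ∈ Ioi (0:ℝ), ENNReal.ofReal (t ^ (c / p - 1)) * rearr μ f t ^ c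
        ≤ (K * N) ^ (c - r) * (ENNReal.ofReal (t ^ (r / p - 1)) * rearr μ f t ^ r) := by
      intro t ht
      rw [mem_Ioi] at ht
      have hpb := point_bound (μ := μ) hp hr ht f
      have heq : ENNReal.ofReal (t ^ (c / p - 1)) * rearr μ f t ^ c
          = (ENNReal.ofReal (t ^ (1 / p)) * rearr μ f t) ^ (c - r)
            * (ENNReal.ofReal (t ^ (r / p - 1)) * rearr μ f t ^ r) := by
        rw [ENNReal.mul_rpow_of_nonneg _ _ (by linarith : (0:ℝ) ≤ c - r),
          ENNReal.ofReal_rpow_of_pos (by positivity), ← Real.rpow_mul ht.le]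
        have : 1 / p * (c - r) = (c - r) / p := by ring
        rw [this]
        calc ENNReal.ofReal (t ^ (c / p - 1)) * rearr μ f t ^ c
            = (ENNReal.ofReal (t ^ ((c - r) / p)) * ENNReal.ofReal (t ^ (r / p - 1)))
              * (rearr μ f t ^ (c - r) * rearr μ f t ^ r) := by
              rw [← ENNReal.ofReal_mul (by positivity), ← Real.rpow_add ht,
                ← ENNReal.rpow_add_of_nonneg _ _ (by linarith : (0:ℝ) ≤ c - r) hr.le]
              ring_nf
          _ = _ := by ring
      rw [heq]
      exact mul_le_mul_left (ENNReal.rpow_le_rpow hpb (by linarith)) _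
    calc lint μ p c f
        ≤ ∫⁻ t in Ioi (0:ℝ), (K * N) ^ (c - r) * (ENNReal.ofReal (t ^ (r / p - 1)) * rearr μ f t ^ r) :=
          setLIntegral_mono' measurableSet_Ioi hbnd
      _ = (K * N) ^ (c - r) * lint μ p r f := lintegral_const_mul _ (lint_integrand_measurable p r f)
  have hNr : lint μ p r f = N ^ r := by
    rw [hN, ← ENNReal.rpow_mul, one_div, inv_mul_cancel₀ hr.ne', ENNReal.rpow_one]
  have key2 := ENNReal.rpow_le_rpow key (by positivity : (0:ℝ) ≤ 1 / c)
  calc (lint μ p c f) ^ (1 / c)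
      ≤ ((K * N) ^ (c - r) * lint μ p r f) ^ (1 / c) := key2
    _ = K ^ (1 - r / c) * N := by
      have hcomb : (K * N) ^ (c - r) * lint μ p r f = K ^ (c - r) * N ^ c := by
        rw [hNr, ENNReal.mul_rpow_of_nonneg _ _ (by linarith : (0:ℝ) ≤ c - r), mul_assoc,
          ← ENNReal.rpow_add _ _ hNpos hNfin, sub_add_cancel]
      have e1 : (c - r) * (1 / c) = 1 - r / c := by field_simp
      rw [hcomb, ENNReal.mul_rpow_of_nonneg _ _ (by positivity),
        ← ENNReal.rpow_mul, ← ENNReal.rpow_mul, e1, mul_one_div_cancel hc.ne',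
        ENNReal.rpow_one]

end Embedding

section Scaling

lemma lintegral_Ioi_two_mul (F : ℝ → ℝ≥0∞) (hF : Measurable F) :
    ∫⁻ t in Ioi (0 : ℝ), F t = 2 * ∫⁻ s in Ioi (0 : ℝ), F (2 * s) := by
  have hpre : ((2 : ℝ) * ·) ⁻¹' Ioi (0 : ℝ) = Ioi (0 : ℝ) := by
    ext s; simp only [mem_preimage, mem_Ioi]; constructor <;> intro h <;> linarith
  have hmap : Measure.map ((2 : ℝ) * ·) volume = ENNReal.ofReal |(2 : ℝ)⁻¹| • volume :=
    Real.map_volume_mul_left two_ne_zero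
  calc ∫⁻ t in Ioi (0 : ℝ), F t
      = 2 * (ENNReal.ofReal |(2 : ℝ)⁻¹| * ∫⁻ t in Ioi (0 : ℝ), F t) := by
        rw [← mul_assoc]
        have : (2 : ℝ≥0∞) * ENNReal.ofReal |(2 : ℝ)⁻¹| = 1 := by
          rw [abs_of_pos (by norm_num : (0:ℝ) < 2⁻¹),
            ENNReal.ofReal_inv_of_pos (by norm_num : (0:ℝ) < 2)]
          norm_num
          rw [ENNReal.mul_inv_cancel (by norm_num) (by norm_num)]
        rw [this, one_mul]
    _ = 2 * ∫⁻ t in Ioi (0 : ℝ), F t ∂(ENNReal.ofReal |(2 : ℝ)⁻¹| • volume) := by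
        rw [Measure.restrict_smul, lintegral_smul_measure, smul_eq_mul]
    _ = 2 * ∫⁻ t in Ioi (0 : ℝ), F t ∂(Measure.map ((2 : ℝ) * ·) volume) := by rw [hmap]
    _ = 2 * ∫⁻ t, F t ∂(Measure.map ((2 : ℝ) * ·) (volume.restrict (((2 : ℝ) * ·) ⁻¹' Ioi 0))) := by
        rw [Measure.restrict_map (measurable_const_mul 2) measurableSet_Ioi]
    _ = 2 * ∫⁻ s in Ioi (0 : ℝ), F (2 * s) := by
        rw [lintegral_map hF (measurable_const_mul 2), hpre]

end Scaling

section Product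

variable {α : Type*} [MeasurableSpace α] {μ : Measure α}

lemma prod_integrand_measurable (c d : ℝ) (f g : α → ℝ) :
    Measurable fun s : ℝ => ENNReal.ofReal (s ^ c) * (rearr μ f s * rearr μ g s) ^ d := by
  have h1 := rearr_measurable (μ := μ) (f := f)
  have h2 := rearr_measurable (μ := μ) (f := g)
  fun_prop

lemma lint_mul_le {p r : ℝ} (hr : 0 < r) (f g : α → ℝ) :
    lint μ p r (fun x => f x * g x)
      ≤ ENNReal.ofReal (2 ^ (r / p)) *
        ∫⁻ s in Ioi (0 : ℝ), ENNReal.ofReal (s ^ (r / p - 1)) * (rearr μ f s * rearr μ g s) ^ r := by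
  rw [lint, lintegral_Ioi_two_mul _ (lint_integrand_measurable p r _)]
  have hb : ∀ s ∈ Ioi (0 : ℝ),
      ENNReal.ofReal ((2 * s) ^ (r / p - 1)) * rearr μ (fun x => f x * g x) (2 * s) ^ r
        ≤ ENNReal.ofReal ((2 : ℝ) ^ (r / p - 1)) *
          (ENNReal.ofReal (s ^ (r / p - 1)) * (rearr μ f s * rearr μ g s) ^ r) := by
    intro s hs
    rw [mem_Ioi] at hs
    have h1 : rearr μ (fun x => f x * g x) (2 * s) ≤ rearr μ f s * rearr μ g s := by
      have := rearr_mul_le (μ := μ) (f := f) (g := g) hs.le hs.le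
      rwa [← two_mul] at this
    have h2 : (2 * s : ℝ) ^ (r / p - 1) = 2 ^ (r / p - 1) * s ^ (r / p - 1) :=
      Real.mul_rpow (by norm_num) hs.le
    rw [h2, ENNReal.ofReal_mul (by positivity), mul_assoc]
    exact mul_le_mul_right (mul_le_mul_right (ENNReal.rpow_le_rpow h1 hr.le) _) _
  have hconst : (2 : ℝ≥0∞) * ENNReal.ofReal ((2 : ℝ) ^ (r / p - 1)) = ENNReal.ofReal (2 ^ (r / p)) := by
    have h3 : (2 : ℝ) ^ (r / p) = 2 ^ (1 : ℝ) * 2 ^ (r / p - 1) := by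
      rw [← Real.rpow_add (by norm_num : (0:ℝ) < 2)]; norm_num
    rw [h3, Real.rpow_one, ENNReal.ofReal_mul (by norm_num), ENNReal.ofReal_ofNat]
  calc 2 * ∫⁻ s in Ioi (0 : ℝ),
        ENNReal.ofReal ((2 * s) ^ (r / p - 1)) * rearr μ (fun x => f x * g x) (2 * s) ^ r
      ≤ 2 * ∫⁻ s in Ioi (0 : ℝ), ENNReal.ofReal ((2 : ℝ) ^ (r / p - 1)) *
          (ENNReal.ofReal (s ^ (r / p - 1)) * (rearr μ f s * rearr μ g s) ^ r) :=
        mul_le_mul_right (setLIntegral_mono' measurableSet_Ioi hb) _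
    _ = ENNReal.ofReal (2 ^ (r / p)) *
          ∫⁻ s in Ioi (0 : ℝ), ENNReal.ofReal (s ^ (r / p - 1)) * (rearr μ f s * rearr μ g s) ^ r := by
        rw [lintegral_const_mul _ (prod_integrand_measurable (r / p - 1) r f g), ← mul_assoc, hconst]

lemma J_bound_left {p p₁ p₂ r : ℝ} (hp : 0 < p) (hp₁ : 0 < p₁) (hp₂ : 0 < p₂) (hr : 0 < r)
    (hpe : 1 / p = 1 / p₁ + 1 / p₂) (f g : α → ℝ) :
    (∫⁻ s in Ioi (0 : ℝ), ENNReal.ofReal (s ^ (r / p - 1)) * (rearr μ f s * rearr μ g s) ^ r)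
      ≤ (lorentzNorm μ p₁ ∞ f) ^ r * lint μ p₂ r g := by
  have he : r / p - 1 = r / p₁ + (r / p₂ - 1) := by
    have h1 : r / p = r / p₁ + r / p₂ := by
      have h := congrArg (fun x => r * x) hpe
      simpa only [mul_add, mul_one_div] using h
    linarith
  have hb : ∀ s ∈ Ioi (0 : ℝ),
      ENNReal.ofReal (s ^ (r / p - 1)) * (rearr μ f s * rearr μ g s) ^ r
        ≤ (lorentzNorm μ p₁ ∞ f) ^ r * (ENNReal.ofReal (s ^ (r / p₂ - 1)) * rearr μ g s ^ r) := by
    intro s hs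
    rw [mem_Ioi] at hs
    have heq : ENNReal.ofReal (s ^ (r / p - 1)) * (rearr μ f s * rearr μ g s) ^ r
        = (ENNReal.ofReal (s ^ (1 / p₁)) * rearr μ f s) ^ r
          * (ENNReal.ofReal (s ^ (r / p₂ - 1)) * rearr μ g s ^ r) := by
      rw [ENNReal.mul_rpow_of_nonneg _ _ hr.le, ENNReal.mul_rpow_of_nonneg _ _ hr.le,
        ENNReal.ofReal_rpow_of_pos (by positivity), ← Real.rpow_mul hs.le,
        show 1 / p₁ * r = r / p₁ by ring]
      rw [he, Real.rpow_add hs, ENNReal.ofReal_mul (by positivity)]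
      ring
    rw [heq]
    refine mul_le_mul_left (ENNReal.rpow_le_rpow ?_ hr.le) _
    rw [lorentzNorm_top]
    exact le_iSup (fun t : {t : ℝ // 0 < t} =>
      ENNReal.ofReal (t.1 ^ (1 / p₁)) * rearr μ f t.1) ⟨s, hs⟩
  calc (∫⁻ s in Ioi (0 : ℝ), ENNReal.ofReal (s ^ (r / p - 1)) * (rearr μ f s * rearr μ g s) ^ r)
      ≤ ∫⁻ s in Ioi (0 : ℝ), (lorentzNorm μ p₁ ∞ f) ^ r *
          (ENNReal.ofReal (s ^ (r / p₂ - 1)) * rearr μ g s ^ r) :=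
        setLIntegral_mono' measurableSet_Ioi hb
    _ = (lorentzNorm μ p₁ ∞ f) ^ r * lint μ p₂ r g :=
        lintegral_const_mul _ (lint_integrand_measurable p₂ r g)

lemma J_bound_right {p p₁ p₂ r : ℝ} (hp : 0 < p) (hp₁ : 0 < p₁) (hp₂ : 0 < p₂) (hr : 0 < r)
    (hpe : 1 / p = 1 / p₁ + 1 / p₂) (f g : α → ℝ) :
    (∫⁻ s in Ioi (0 : ℝ), ENNReal.ofReal (s ^ (r / p - 1)) * (rearr μ f s * rearr μ g s) ^ r)
      ≤ lint μ p₁ r f * (lorentzNorm μ p₂ ∞ g) ^ r := by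
  have := J_bound_left (μ := μ) hp hp₂ hp₁ hr (by rw [hpe]; ring) g f
  calc (∫⁻ s in Ioi (0 : ℝ), ENNReal.ofReal (s ^ (r / p - 1)) * (rearr μ f s * rearr μ g s) ^ r)
      = ∫⁻ s in Ioi (0 : ℝ), ENNReal.ofReal (s ^ (r / p - 1)) * (rearr μ g s * rearr μ f s) ^ r := by
        congr 1; ext s; rw [mul_comm (rearr μ f s)]
    _ ≤ (lorentzNorm μ p₂ ∞ g) ^ r * lint μ p₁ r f := this
    _ = lint μ p₁ r f * (lorentzNorm μ p₂ ∞ g) ^ r := mul_comm _ _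

lemma J_bound_holder {p p₁ p₂ r a b : ℝ} (hp : 0 < p) (hp₁ : 0 < p₁) (hp₂ : 0 < p₂)
    (hr : 0 < r) (hra : r < a) (hrb : r < b) (hab : 1 / a + 1 / b = 1 / r)
    (hpe : 1 / p = 1 / p₁ + 1 / p₂) (f g : α → ℝ) :
    (∫⁻ s in Ioi (0 : ℝ), ENNReal.ofReal (s ^ (r / p - 1)) * (rearr μ f s * rearr μ g s) ^ r)
      ≤ (lint μ p₁ a f) ^ (r / a) * (lint μ p₂ b g) ^ (r / b) := by
  have ha : 0 < a := lt_trans hr hra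
  have hb : 0 < b := lt_trans hr hrb
  set F₁ : ℝ → ℝ≥0∞ := fun s => (ENNReal.ofReal (s ^ (a / p₁ - 1)) * rearr μ f s ^ a) ^ (r / a)
    with hF₁
  set F₂ : ℝ → ℝ≥0∞ := fun s => (ENNReal.ofReal (s ^ (b / p₂ - 1)) * rearr μ g s ^ b) ^ (r / b)
    with hF₂
  have hm₁ : Measurable F₁ := by
    have := rearr_measurable (μ := μ) (f := f); rw [hF₁]; fun_prop
  have hm₂ : Measurable F₂ := by
    have := rearr_measurable (μ := μ) (f := g); rw [hF₂]; fun_prop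
  have h2 : r / a + r / b = 1 := by
    have h := congrArg (fun x => r * x) hab
    simp only [mul_add, mul_one_div] at h
    rwa [div_self hr.ne'] at h
  have hptwise : ∀ s ∈ Ioi (0 : ℝ),
      ENNReal.ofReal (s ^ (r / p - 1)) * (rearr μ f s * rearr μ g s) ^ r = F₁ s * F₂ s := by
    intro s hs
    rw [mem_Ioi] at hs
    have e₁ : F₁ s = ENNReal.ofReal (s ^ (r / p₁ - r / a)) * rearr μ f s ^ r := by
      simp only [hF₁]
      rw [ENNReal.mul_rpow_of_nonneg _ _ (by positivity),
        ENNReal.ofReal_rpow_of_pos (by positivity), ← Real.rpow_mul hs.le, ← ENNReal.rpow_mul,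
        show (a / p₁ - 1) * (r / a) = r / p₁ - r / a by field_simp,
        show a * (r / a) = r by field_simp]
    have e₂ : F₂ s = ENNReal.ofReal (s ^ (r / p₂ - r / b)) * rearr μ g s ^ r := by
      simp only [hF₂]
      rw [ENNReal.mul_rpow_of_nonneg _ _ (by positivity),
        ENNReal.ofReal_rpow_of_pos (by positivity), ← Real.rpow_mul hs.le, ← ENNReal.rpow_mul,
        show (b / p₂ - 1) * (r / b) = r / p₂ - r / b by field_simp,
        show b * (r / b) = r by field_simp]
    have hee : r / p - 1 = (r / p₁ - r / a) + (r / p₂ - r / b) := by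
      have h1 : r / p = r / p₁ + r / p₂ := by
        have h := congrArg (fun x => r * x) hpe
        simpa only [mul_add, mul_one_div] using h
      linarith
    rw [e₁, e₂, ENNReal.mul_rpow_of_nonneg _ _ hr.le, hee, Real.rpow_add hs,
      ENNReal.ofReal_mul (by positivity)]
    ring
  have hconj : (a / r).HolderConjugate (b / r) := by
    rw [Real.holderConjugate_iff]
    constructor
    · exact (one_lt_div hr).2 hra
    · rw [inv_div, inv_div]
      exact h2
  calc (∫⁻ s in Ioi (0 : ℝ), ENNReal.ofReal (s ^ (r / p - 1)) * (rearr μ f s * rearr μ g s) ^ r)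
      = ∫⁻ s in Ioi (0 : ℝ), F₁ s * F₂ s := setLIntegral_congr_fun measurableSet_Ioi
        hptwise
    _ ≤ (∫⁻ s in Ioi (0 : ℝ), F₁ s ^ (a / r)) ^ (1 / (a / r))
        * (∫⁻ s in Ioi (0 : ℝ), F₂ s ^ (b / r)) ^ (1 / (b / r)) :=
        ENNReal.lintegral_mul_le_Lp_mul_Lq _ hconj hm₁.aemeasurable hm₂.aemeasurable
    _ = (lint μ p₁ a f) ^ (r / a) * (lint μ p₂ b g) ^ (r / b) := by
        rw [one_div_div, one_div_div]
        have hcan : ∀ u v : ℝ, 0 < u → 0 < v → u / v * (v / u) = 1 := by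
          intro u v hu hv
          rw [div_mul_div_comm, mul_comm]
          exact div_self (by positivity)
        congr 1
        · congr 1
          refine setLIntegral_congr_fun measurableSet_Ioi ?_
          intro s _
          simp only [hF₁]
          rw [← ENNReal.rpow_mul, hcan r a hr ha, ENNReal.rpow_one]
        · congr 1
          refine setLIntegral_congr_fun measurableSet_Ioi ?_
          intro s _
          simp only [hF₂]
          rw [← ENNReal.rpow_mul, hcan r b hr hb, ENNReal.rpow_one]

end Product

theorem oneil_general (p p₁ p₂ : ℝ) (q q₁ q₂ : ℝ≥0∞)
    (hp : 0 < p) (hp₁ : 0 < p₁) (hp₂ : 0 < p₂)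
    (hq : 0 < q) (hq₁ : 0 < q₁) (hq₂ : 0 < q₂)
    (hpe : 1 / p = 1 / p₁ + 1 / p₂) (hqe : q⁻¹ ≤ q₁⁻¹ + q₂⁻¹) :
    ∃ K : ℝ≥0∞, K ≠ ∞ ∧ ∀ {α : Type} [MeasurableSpace α] (μ : Measure α) (f g : α → ℝ),
      lorentzNorm μ p q (fun x => f x * g x)
        ≤ K * lorentzNorm μ p₁ q₁ f * lorentzNorm μ p₂ q₂ g := by
  by_cases hboth : q₁ = ∞ ∧ q₂ = ∞
  · obtain ⟨hq₁t, hq₂t⟩ := hboth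
    have hqt : q = ∞ := by
      refine ENNReal.inv_eq_zero.mp (le_antisymm ?_ zero_le)
      simpa [hq₁t, hq₂t] using hqe
    refine ⟨ENNReal.ofReal (2 ^ (1 / p)), ENNReal.ofReal_ne_top, ?_⟩
    intro α _ μ f g
    rw [hqt, hq₁t, hq₂t, lorentzNorm_top, lorentzNorm_top, lorentzNorm_top]
    refine iSup_le ?_
    rintro ⟨t, ht⟩
    have ht2 : 0 < t / 2 := half_pos ht
    have h1 : rearr μ (fun x => f x * g x) t ≤ rearr μ f (t / 2) * rearr μ g (t / 2) := by
      have := rearr_mul_le (μ := μ) (f := f) (g := g) ht2.le ht2.le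
      rwa [add_halves] at this
    have h2r : t ^ (1 / p) = 2 ^ (1 / p) * ((t / 2) ^ (1 / p₁) * (t / 2) ^ (1 / p₂)) := by
      rw [← Real.rpow_add ht2, ← hpe, ← Real.mul_rpow (by norm_num) ht2.le]
      congr 1
      ring
    calc ENNReal.ofReal (t ^ (1 / p)) * rearr μ (fun x => f x * g x) t
        ≤ (ENNReal.ofReal (2 ^ (1 / p)) *
            (ENNReal.ofReal ((t / 2) ^ (1 / p₁)) * ENNReal.ofReal ((t / 2) ^ (1 / p₂))))
            * (rearr μ f (t / 2) * rearr μ g (t / 2)) := by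
          rw [h2r, ENNReal.ofReal_mul (Real.rpow_nonneg (by norm_num : (0:ℝ) ≤ 2) _), ENNReal.ofReal_mul (by positivity)]
          exact mul_le_mul_right h1 _
      _ = (ENNReal.ofReal (2 ^ (1 / p)) *
            (ENNReal.ofReal ((t / 2) ^ (1 / p₁)) * rearr μ f (t / 2)))
            * (ENNReal.ofReal ((t / 2) ^ (1 / p₂)) * rearr μ g (t / 2)) := by ring
      _ ≤ (ENNReal.ofReal (2 ^ (1 / p)) *
            ⨆ s : {s : ℝ // 0 < s}, ENNReal.ofReal (s.1 ^ (1 / p₁)) * rearr μ f s.1)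
            * ⨆ s : {s : ℝ // 0 < s}, ENNReal.ofReal (s.1 ^ (1 / p₂)) * rearr μ g s.1 := by
          refine mul_le_mul' (mul_le_mul_right ?_ _) ?_
          · exact le_iSup (fun s : {s : ℝ // 0 < s} =>
              ENNReal.ofReal (s.1 ^ (1 / p₁)) * rearr μ f s.1) ⟨t / 2, ht2⟩
          · exact le_iSup (fun s : {s : ℝ // 0 < s} =>
              ENNReal.ofReal (s.1 ^ (1 / p₂)) * rearr μ g s.1) ⟨t / 2, ht2⟩
  -- at least one second exponent is finite
  · set r : ℝ≥0∞ := (q₁⁻¹ + q₂⁻¹)⁻¹ with hrdef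
    have hsumtop : q₁⁻¹ + q₂⁻¹ ≠ ∞ :=
      ENNReal.add_ne_top.mpr ⟨ENNReal.inv_ne_top.mpr hq₁.ne', ENNReal.inv_ne_top.mpr hq₂.ne'⟩
    have hsum0 : q₁⁻¹ + q₂⁻¹ ≠ 0 := by
      intro hc
      rw [add_eq_zero] at hc
      exact hboth ⟨ENNReal.inv_eq_zero.mp hc.1, ENNReal.inv_eq_zero.mp hc.2⟩
    have hr0 : r ≠ 0 := ENNReal.inv_ne_zero.mpr hsumtop
    have hrtop : r ≠ ∞ := ENNReal.inv_ne_top.mpr hsum0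
    have hrinv : r⁻¹ = q₁⁻¹ + q₂⁻¹ := by rw [hrdef, inv_inv]
    set r' : ℝ := r.toReal with hr'def
    have hr' : 0 < r' := ENNReal.toReal_pos hr0 hrtop
    have hrq : r ≤ q := ENNReal.inv_le_inv.mp (by rw [hrinv]; exact hqe)
    -- Step 1 : embedding L^{p,r} → L^{p,q}
    have step1 : ∃ K₁ : ℝ≥0∞, K₁ ≠ ∞ ∧ ∀ {α : Type} [MeasurableSpace α] (μ : Measure α)
        (h : α → ℝ), lorentzNorm μ p q h ≤ K₁ * (lint μ p r' h) ^ (1 / r') := by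
      by_cases hqt : q = ∞
      · refine ⟨ENNReal.ofReal ((r' / p) ^ (1 / r')), ENNReal.ofReal_ne_top, ?_⟩
        intro α _ μ h
        rw [hqt]
        exact emb_top hp hr' h
      · have hq' : 0 < q.toReal := ENNReal.toReal_pos hq.ne' hqt
        have hrq' : r' ≤ q.toReal := (ENNReal.toReal_le_toReal hrtop hqt).mpr hrq
        refine ⟨(ENNReal.ofReal ((r' / p) ^ (1 / r'))) ^ (1 - r' / q.toReal),
          ENNReal.rpow_ne_top_of_nonneg
            (sub_nonneg.2 ((div_le_one hq').2 hrq')) ENNReal.ofReal_ne_top, ?_⟩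
        intro α _ μ h
        rw [lorentzNorm_eq hqt]
        exact emb_lt_top hp hr' hrq' h
    -- Step 2 : product estimate at exponent r
    have step2 : ∀ {α : Type} [MeasurableSpace α] (μ : Measure α) (f g : α → ℝ),
        (lint μ p r' (fun x => f x * g x)) ^ (1 / r')
          ≤ ENNReal.ofReal (2 ^ (1 / p)) *
            (lorentzNorm μ p₁ q₁ f * lorentzNorm μ p₂ q₂ g) := by
      intro α _ μ f g
      have hJ : (∫⁻ s in Ioi (0 : ℝ),
            ENNReal.ofReal (s ^ (r' / p - 1)) * (rearr μ f s * rearr μ g s) ^ r')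
          ≤ (lorentzNorm μ p₁ q₁ f) ^ r' * (lorentzNorm μ p₂ q₂ g) ^ r' := by
        by_cases h1t : q₁ = ∞
        · have h2t : q₂ ≠ ∞ := fun hc => hboth ⟨h1t, hc⟩
          have hrr : r' = q₂.toReal := by rw [hr'def, show r = q₂ by rw [hrdef, h1t]; simp]
          refine le_trans (J_bound_left (μ := μ) hp hp₁ hp₂ hr' hpe f g) ?_
          rw [h1t]
          refine mul_le_mul_right ?_ _
          rw [lorentzNorm_eq h2t, ← ENNReal.rpow_mul, ← hrr, one_div,
            inv_mul_cancel₀ hr'.ne', ENNReal.rpow_one]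
        · by_cases h2t : q₂ = ∞
          · have hrr : r' = q₁.toReal := by rw [hr'def, show r = q₁ by rw [hrdef, h2t]; simp]
            refine le_trans (J_bound_right (μ := μ) hp hp₁ hp₂ hr' hpe f g) ?_
            rw [h2t]
            refine mul_le_mul_left ?_ _
            rw [lorentzNorm_eq h1t, ← ENNReal.rpow_mul, ← hrr, one_div,
              inv_mul_cancel₀ hr'.ne', ENNReal.rpow_one]
          · -- both finite : Hölder
            have ha' : 0 < q₁.toReal := ENNReal.toReal_pos hq₁.ne' h1t
            have hb' : 0 < q₂.toReal := ENNReal.toReal_pos hq₂.ne' h2t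
            have hra : r' < q₁.toReal := by
              refine (ENNReal.toReal_lt_toReal hrtop h1t).mpr ?_
              refine ENNReal.inv_lt_inv.mp ?_
              rw [hrinv]
              exact ENNReal.lt_add_right (ENNReal.inv_ne_top.mpr hq₁.ne')
                (ENNReal.inv_ne_zero.mpr h2t)
            have hrb : r' < q₂.toReal := by
              refine (ENNReal.toReal_lt_toReal hrtop h2t).mpr ?_
              refine ENNReal.inv_lt_inv.mp ?_
              rw [hrinv, add_comm]
              exact ENNReal.lt_add_right (ENNReal.inv_ne_top.mpr hq₂.ne')
                (ENNReal.inv_ne_zero.mpr h1t)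
            have hab : 1 / q₁.toReal + 1 / q₂.toReal = 1 / r' := by
              have h := congrArg ENNReal.toReal hrinv
              rw [ENNReal.toReal_add (ENNReal.inv_ne_top.mpr hq₁.ne')
                (ENNReal.inv_ne_top.mpr hq₂.ne')] at h
              simp only [ENNReal.toReal_inv] at h
              simp only [one_div]
              exact h.symm
            refine le_trans
              (J_bound_holder (μ := μ) hp hp₁ hp₂ hr' hra hrb hab hpe f g) ?_
            rw [lorentzNorm_eq h1t, lorentzNorm_eq h2t, ← ENNReal.rpow_mul, ← ENNReal.rpow_mul,
              show 1 / q₁.toReal * r' = r' / q₁.toReal by ring,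
              show 1 / q₂.toReal * r' = r' / q₂.toReal by ring]
      calc (lint μ p r' (fun x => f x * g x)) ^ (1 / r')
          ≤ (ENNReal.ofReal (2 ^ (r' / p)) *
              ((lorentzNorm μ p₁ q₁ f) ^ r' * (lorentzNorm μ p₂ q₂ g) ^ r')) ^ (1 / r') :=
            ENNReal.rpow_le_rpow
              (le_trans (lint_mul_le hr' f g) (mul_le_mul_right hJ _)) (by positivity)
        _ = ENNReal.ofReal (2 ^ (1 / p)) *
              (lorentzNorm μ p₁ q₁ f * lorentzNorm μ p₂ q₂ g) := by
            rw [ENNReal.mul_rpow_of_nonneg _ _ (by positivity),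
              ENNReal.mul_rpow_of_nonneg _ _ (by positivity),
              ← ENNReal.rpow_mul, ← ENNReal.rpow_mul, mul_one_div_cancel hr'.ne',
              ENNReal.rpow_one, ENNReal.rpow_one,
              ENNReal.ofReal_rpow_of_pos (by positivity),
              ← Real.rpow_mul (by norm_num : (0:ℝ) ≤ 2),
              show r' / p * (1 / r') = 1 / p by field_simp]
    obtain ⟨K₁, hK₁, hs1⟩ := step1
    refine ⟨K₁ * ENNReal.ofReal (2 ^ (1 / p)),
      ENNReal.mul_ne_top hK₁ ENNReal.ofReal_ne_top, ?_⟩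
    intro α _ μ f g
    calc lorentzNorm μ p q (fun x => f x * g x)
        ≤ K₁ * (lint μ p r' (fun x => f x * g x)) ^ (1 / r') := hs1 μ _
      _ ≤ K₁ * (ENNReal.ofReal (2 ^ (1 / p)) *
            (lorentzNorm μ p₁ q₁ f * lorentzNorm μ p₂ q₂ g)) :=
          mul_le_mul_right (step2 μ f g) _
      _ = K₁ * ENNReal.ofReal (2 ^ (1 / p)) * lorentzNorm μ p₁ q₁ f
            * lorentzNorm μ p₂ q₂ g := by ring

/-- O'Neil's Hölder inequality in Lorentz spaces: if `1/p = 1/p₁ + 1/p₂` and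
`1/q ≤ 1/q₁ + 1/q₂`, then `‖fg‖_{p,q} ≤ C ‖f‖_{p₁,q₁} ‖g‖_{p₂,q₂}` with
`C = C(p₁,p₂,q₁,q₂,q)`, on any domain `Ω ⊆ ℝⁿ`. -/
theorem stmt_0 (p p₁ p₂ : ℝ) (q q₁ q₂ : ℝ≥0∞)
    (hp : 0 < p) (hp₁ : 0 < p₁) (hp₂ : 0 < p₂)
    (hq : 0 < q) (hq₁ : 0 < q₁) (hq₂ : 0 < q₂)
    (hpe : 1 / p = 1 / p₁ + 1 / p₂) (hqe : q⁻¹ ≤ q₁⁻¹ + q₂⁻¹) :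
    ∃ C : ℝ, 0 < C ∧ ∀ (n : ℕ) (Ω : Set (En n)) (f g : En n → ℝ),
      AEMeasurable f (volume.restrict Ω) → AEMeasurable g (volume.restrict Ω) →
      lorentzNorm (volume.restrict Ω) p q (fun x => f x * g x)
        ≤ ENNReal.ofReal C * lorentzNorm (volume.restrict Ω) p₁ q₁ f
            * lorentzNorm (volume.restrict Ω) p₂ q₂ g := by
  obtain ⟨K, hK, hbd⟩ := oneil_general p p₁ p₂ q q₁ q₂ hp hp₁ hp₂ hq hq₁ hq₂ hpe hqe
  refine ⟨K.toReal + 1, by positivity, ?_⟩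
  intro n Ω f g _ _
  refine le_trans (hbd (volume.restrict Ω) f g) ?_
  have hKle : K ≤ ENNReal.ofReal (K.toReal + 1) :=
    ((ENNReal.ofReal_toReal hK).symm.le).trans
      (ENNReal.ofReal_le_ofReal (by linarith [ENNReal.toReal_nonneg (a := K)]))
  exact mul_le_mul_left (mul_le_mul_left hKle _) _
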